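/- Let (E, ℋ) be a Steiner system of type (5,8,24) (the Witt geometry) and let M be its associated matroid of rank 6, whose bases are the 6-element subsets of E contained in no block. Then P_M(t) = 1 + 735t + 4830t². -/

import Mathlib

/-!
In the matroid of a Steiner system of type `(d, k, n)`, a set `S` has rank `|S|` if `|S| ≤ d`,
rank `d` if `|S| ≥ d` and `S` lies in a block `Bl`, and rank `d + 1` otherwise. Contracting a
set `F` with `|F| ≤ d` gives the matroid of the derived system of type
`(d - |F|, k - |F|, n - |F|)`; contracting `S ⊆ Bl` with `|S| ≥ d` gives a rank-one matroid with
loops `Bl \ S`, whose Kazhdan–Lusztig polynomial is `1` if `S = Bl` and `0` otherwise; any other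
proper contraction has rank zero and `P = 0`. Hence
`Z_M = ∑_{i < d} C(n, i) t^i P_i + b t^d + t^(d+1)`, where `P_0 = P_M`, `P_i` (`i > 0`) belongs to
the derived system of type `(d - i, k - i, n - i)` and `b = C(n, d) / C(k, d)` is the number of
blocks; palindromicity of `Z_M` then determines `P_M`. Climbing the derived designs
`(1,4,20), (2,5,21), …, (5,8,24)` of the Witt design gives
`1, 1, 1 + 55t, 1 + 230t + 253t², 1 + 735t + 4830t²`.
-/

open Polynomial Matroid

namespace KLPaper

variable {α : Type} [Fintype α]

/-- The contraction `M ⧸ C` of a set `C` in a matroid `M`, defined (as is standard,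
see e.g. Oxley, Prop. 3.1.1) as the dual of the deletion of `C` from the dual matroid,
where deletion of `C` is restriction to `M.E \ C`.  Its ground set is `M.E \ C`. -/
noncomputable def contract (M : Matroid α) (C : Set α) : Matroid α :=
  (M✶ ↾ (M.E \ C))✶

scoped infixl:75 " ⧸ " => KLPaper.contract

/-- The rank `rk M S` of a set `S` in a matroid `M`: the largest cardinality of an
independent subset of `S`. -/
noncomputable def rk (M : Matroid α) (S : Set α) : ℕ :=
  sSup {n | ∃ I, I ⊆ S ∧ M.Indep I ∧ I.ncard = n}

/-- The rank of a matroid: the rank of its ground set. -/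
noncomputable def rank (M : Matroid α) : ℕ := rk M M.E

/-- A circuit of a matroid: a minimal dependent set, i.e. a dependent subset of the
ground set all of whose proper subsets are independent. -/
def IsCircuit (M : Matroid α) (C : Set α) : Prop :=
  M.Dep C ∧ ∀ D ⊂ C, M.Indep D

/-- A hyperplane of a matroid: a maximal proper flat. -/
def IsHyperplane (M : Matroid α) (H : Set α) : Prop :=
  M.IsFlat H ∧ H ≠ M.E ∧ ∀ F, M.IsFlat F → H ⊂ F → F = M.E

/-- A stressed hyperplane of a matroid `M` of rank `k`: a hyperplane `H` such that every
`k`-element subset of `H` is a circuit of `M`. -/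
def Stressed (M : Matroid α) (H : Set α) : Prop :=
  IsHyperplane M H ∧ ∀ C ⊆ H, C.ncard = rank M → IsCircuit M C

/-- `Mt` is the relaxation of `M` at the stressed hyperplane `H`: the matroid on the same
ground set whose bases are exactly the bases of `M` together with all `(rank M)`-element
subsets of `H`. -/
def IsRelaxation (M Mt : Matroid α) (H : Set α) : Prop :=
  Mt.E = M.E ∧ ∀ B : Set α, Mt.IsBase B ↔ (M.IsBase B ∨ (B ⊆ H ∧ B.ncard = rank M))

/-- The characterization of the Kazhdan–Lusztig polynomials `P_M` and the `Z`-polynomials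
`Z_M` of matroids (on a fixed finite type): (i) both equal `1` on matroids with empty
ground set; (ii) `2 · deg P_M < rk M` when the ground set is nonempty (the zero
polynomial being allowed); (iii) `Z_M` is palindromic of degree `rk M`;
(iv) `Z_M = Σ_{S ⊆ E} t^{rk S} · P_{M ⧸ S}`, the sum over all subsets `S` of `E`. -/
def PZaxioms (P Z : Matroid α → Polynomial ℤ) : Prop :=
  (∀ M : Matroid α, M.E = ∅ → P M = 1 ∧ Z M = 1) ∧
  (∀ M : Matroid α, M.E ≠ ∅ → (P M = 0 ∨ 2 * (P M).natDegree < rank M)) ∧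
  (∀ M : Matroid α, (Z M).natDegree ≤ rank M ∧
      ∀ i ≤ rank M, (Z M).coeff i = (Z M).coeff (rank M - i)) ∧
  (∀ M : Matroid α,
      Z M = ∑ S ∈ M.E.toFinite.toFinset.powerset,
        X ^ (rk M (S : Set α)) * P (M ⧸ (S : Set α)))

end KLPaper

namespace KLPaper

variable {α : Type} {M : Matroid α} {B I S : Set α}

lemma contract_eq (M : Matroid α) (C : Set α) : (M ⧸ C) = M ／ C := rfl

lemma rk_le {n : ℕ} (h : ∀ I ⊆ S, M.Indep I → I.ncard ≤ n) : rk M S ≤ n :=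
  csSup_le ⟨0, ∅, by simp⟩ (by rintro _ ⟨I, hIS, hI, rfl⟩; exact h I hIS hI)

lemma rk_eq_zero_of_subset_loops (hS : S ⊆ M.loops) : rk M S = 0 :=
  Nat.le_zero.mp <| rk_le fun I hIS hI ↦ by simp [hI.eq_empty_of_subset_loops (hIS.trans hS)]

section Finite

variable [Finite α]

lemma le_rk (hIS : I ⊆ S) (hI : M.Indep I) : I.ncard ≤ rk M S :=
  le_csSup ⟨Nat.card α, by rintro _ ⟨J, -, -, rfl⟩; exact Set.ncard_le_card J⟩
    ⟨I, hIS, hI, rfl⟩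

lemma rk_eq_ncard_of_indep (hI : M.Indep I) : rk M I = I.ncard :=
  le_antisymm (rk_le fun _ hJI _ ↦ Set.ncard_le_ncard hJI) (le_rk subset_rfl hI)

lemma ncard_le_of_indep_of_isBase (hI : M.Indep I) (hB : M.IsBase B) : I.ncard ≤ B.ncard := by
  obtain ⟨B', hB', hIB'⟩ := hI.exists_isBase_superset
  exact (Set.ncard_le_ncard hIB').trans (hB'.ncard_eq_ncard_of_isBase hB).le

lemma rk_eq_ncard_of_isBase_subset (hB : M.IsBase B) (hBS : B ⊆ S) : rk M S = B.ncard :=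
  le_antisymm (rk_le fun _ _ hI ↦ ncard_le_of_indep_of_isBase hI hB) (le_rk hBS hB.indep)

lemma rank_eq_ncard (hB : M.IsBase B) : rank M = B.ncard :=
  rk_eq_ncard_of_isBase_subset hB hB.subset_ground

lemma isBase_of_indep_of_rank_le (hI : M.Indep I) (h : rank M ≤ I.ncard) : M.IsBase I := by
  obtain ⟨B, hB, hIB⟩ := hI.exists_isBase_superset
  rwa [Set.eq_of_subset_of_ncard_le hIB (rank_eq_ncard hB ▸ h)]

lemma spanning_of_rank_eq_one (hr : rank M = 1) (hSE : S ⊆ M.E) (hS : ¬S ⊆ M.loops) :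
    M.Spanning S := by
  obtain ⟨e, heS, heL⟩ := Set.not_subset.mp hS
  have he : M.IsBase {e} := isBase_of_indep_of_rank_le
    (indep_singleton.mpr (isNonloop_iff_mem_compl_loops.mpr ⟨hSE heS, heL⟩)) (by simp [hr])
  exact he.spanning.superset (Set.singleton_subset_iff.mpr heS) hSE

lemma rk_eq_rank_of_spanning (hS : M.Spanning S) : rk M S = rank M := by
  obtain ⟨B, hB, hBS⟩ := hS.exists_isBase_subset
  rw [rk_eq_ncard_of_isBase_subset hB hBS, rank_eq_ncard hB]

lemma rank_contract_of_spanning (hS : M.Spanning S) : rank (M ⧸ S) = 0 := by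
  have hB : (M ⧸ S).IsBase ∅ := by
    rw [contract_eq, hS.contract_eq_loopyOn, loopyOn_isBase_iff]
  simpa using rank_eq_ncard hB

lemma rank_contract_of_subset_loops (hS : S ⊆ M.loops) : rank (M ⧸ S) = rank M := by
  obtain ⟨B, hB⟩ := M.exists_isBase
  have hBS : B ⊆ M.E \ S := Set.subset_sdiff.mpr
    ⟨hB.subset_ground, (hB.indep.disjoint_loops).mono_right hS⟩
  have hB' : (M ⧸ S).IsBase B := by
    rw [contract_eq, contract_eq_delete_of_subset_loops hS, delete_isBase_iff]
    exact hB.isBasis_of_subset Set.sdiff_subset hBS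
  rw [rank_eq_ncard hB', rank_eq_ncard hB]

end Finite

lemma loops_contract_of_subset_loops (hS : S ⊆ M.loops) : (M ⧸ S).loops = M.loops \ S := by
  rw [contract_eq, contract_loops_eq, closure_eq_loops_of_subset hS]

section KL

variable [Fintype α] {P Z : Matroid α → ℤ[X]}

lemma PZaxioms.P_eq_one_of_ground_eq_empty (hPZ : PZaxioms P Z) (hE : M.E = ∅) : P M = 1 :=
  (hPZ.1 M hE).1

lemma PZaxioms.coeff_P_eq_zero (hPZ : PZaxioms P Z) (hE : M.E ≠ ∅) {j : ℕ}
    (hj : rank M ≤ 2 * j) : (P M).coeff j = 0 := by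
  obtain h | h := hPZ.2.1 M hE
  · simp [h]
  · exact coeff_eq_zero_of_natDegree_lt (by omega)

lemma PZaxioms.P_eq_zero_of_rank_eq_zero (hPZ : PZaxioms P Z) (hE : M.E ≠ ∅)
    (hr : rank M = 0) : P M = 0 := by
  obtain h | h := hPZ.2.1 M hE
  · exact h
  · omega

lemma PZaxioms.P_contract_of_spanning (hPZ : PZaxioms P Z) (hS : M.Spanning S) :
    P (M ⧸ S) = if S = M.E then 1 else 0 := by
  split_ifs with hSE
  · exact hPZ.P_eq_one_of_ground_eq_empty (by simp [contract_eq, hSE])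
  · refine hPZ.P_eq_zero_of_rank_eq_zero ?_ (rank_contract_of_spanning hS)
    rw [contract_eq, Matroid.contract_ground, Ne, Set.sdiff_eq_empty]
    exact fun h ↦ hSE (hS.subset_ground.antisymm h)

open scoped Classical in
lemma PZaxioms.Z_eq_P_add_sum (hPZ : PZaxioms P Z) (M : Matroid α) :
    Z M = P M + ∑ S ∈ M.E.toFinite.toFinset.powerset.erase ∅,
      X ^ rk M (S : Set α) * P (M ⧸ (S : Set α)) := by
  rw [hPZ.2.2.2 M, ← Finset.add_sum_erase _ _ (Finset.empty_mem_powerset _), Finset.coe_empty,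
    rk_eq_zero_of_subset_loops (Set.empty_subset _), contract_eq, contract_empty, pow_zero,
    one_mul]

/-- Palindromicity of `Z M` pairs the coefficient of `t ^ j`, `2 j < rank M`, with that of
`t ^ (rank M - j)`, where `P M` vanishes; so `Z M - P M` determines `P M`. -/
lemma PZaxioms.P_eq_of_Z_eq_add (hPZ : PZaxioms P Z) (hE : M.E ≠ ∅) {R Q : ℤ[X]}
    (hZ : Z M = P M + R)
    (hQR : ∀ i ≤ rank M, (Q + R).coeff i = (Q + R).coeff (rank M - i))
    (hQ : ∀ j, rank M ≤ 2 * j → Q.coeff j = 0) : P M = Q := by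
  ext j
  by_cases hj : rank M ≤ 2 * j
  · rw [hPZ.coeff_P_eq_zero hE hj, hQ j hj]
  have hPZj := (hPZ.2.2.1 M).2 j (by omega)
  have hQRj := hQR j (by omega)
  rw [hZ] at hPZj
  simp only [coeff_add, hPZ.coeff_P_eq_zero hE (j := rank M - j) (by omega),
    hQ (rank M - j) (by omega)] at hPZj hQRj
  linarith

open scoped Classical in
lemma PZaxioms.Z_eq_of_rank_eq_one (hPZ : PZaxioms P Z) (hr : rank M = 1)
    (hP : ∀ S ⊆ M.loops, S.Nonempty → P (M ⧸ S) = if S = M.loops then 1 else 0) :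
    Z M = P M + ((if M.loops = ∅ then 0 else 1) + X) := by
  set E' := M.E.toFinite.toFinset
  set L' := M.loops.toFinite.toFinset
  have hE' : (E' : Set α) = M.E := Set.Finite.coe_toFinset _
  have hL' : (L' : Set α) = M.loops := Set.Finite.coe_toFinset _
  obtain ⟨B, hB⟩ := M.exists_isBase
  obtain ⟨e, rfl⟩ := Set.ncard_eq_one.mp ((rank_eq_ncard hB).symm.trans hr)
  have heL : e ∉ M.loops := (isNonloop_iff_mem_compl_loops.mp (indep_singleton.mp hB.indep)).2
  have hterm : ∀ S ∈ E'.powerset.erase ∅, X ^ rk M (S : Set α) * P (M ⧸ (S : Set α)) =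
      (if S = L' then 1 else 0) + (if S = E' then X else 0) := by
    intro S hS
    rw [Finset.mem_erase, Finset.mem_powerset, ← Finset.coe_subset, hE'] at hS
    by_cases hSL : (S : Set α) ⊆ M.loops
    · have hSE : S ≠ E' := by
        rintro rfl
        exact heL (hSL (hE' ▸ hB.subset_ground rfl))
      rw [rk_eq_zero_of_subset_loops hSL, pow_zero, one_mul, if_neg hSE, add_zero,
        hP _ hSL (Finset.coe_nonempty.mpr (Finset.nonempty_iff_ne_empty.mpr hS.1))]
      simp only [← hL', Finset.coe_inj]
    · have hSsp := spanning_of_rank_eq_one hr hS.2 hSL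
      have hSL' : S ≠ L' := by
        rintro rfl
        exact hSL (hL' ▸ subset_rfl)
      rw [rk_eq_rank_of_spanning hSsp, hr, pow_one, hPZ.P_contract_of_spanning hSsp, if_neg hSL',
        zero_add]
      simp only [← hE', Finset.coe_inj, mul_ite, mul_one, mul_zero]
  have hL'mem : L' ∈ E'.powerset.erase ∅ ↔ ¬M.loops = ∅ := by
    rw [Finset.mem_erase, Finset.mem_powerset, ← Finset.coe_subset, hL', hE',
      and_iff_left M.loops_subset_ground, Ne, ← Finset.coe_eq_empty, hL']
  have hE'mem : E' ∈ E'.powerset.erase ∅ := Finset.mem_erase.mpr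
    ⟨fun h ↦ by simpa [← hE', h] using hB.subset_ground, Finset.mem_powerset_self _⟩
  rw [hPZ.Z_eq_P_add_sum, Finset.sum_congr rfl hterm, Finset.sum_add_distrib,
    Finset.sum_ite_eq', Finset.sum_ite_eq', if_pos hE'mem, if_congr hL'mem rfl rfl, ite_not]

open scoped Classical in
theorem PZaxioms.P_eq_of_rank_eq_one (hPZ : PZaxioms P Z) (hr : rank M = 1) :
    P M = if M.loops = ∅ then 1 else 0 := by
  induction hm : M.loops.ncard using Nat.strong_induction_on generalizing M with
  | _ m IH =>
  have hZ := hPZ.Z_eq_of_rank_eq_one hr fun S hSL hS ↦ by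
    have hlt : (M.loops \ S).ncard < m := by
      rw [Set.ncard_sdiff hSL, ← hm]
      have := Set.ncard_le_ncard hSL
      have := (Set.ncard_pos (s := S)).mpr hS
      omega
    rw [IH _ hlt (hr ▸ rank_contract_of_subset_loops hSL)
      (by rw [loops_contract_of_subset_loops hSL]), loops_contract_of_subset_loops hSL]
    exact if_congr (Set.sdiff_eq_empty.trans hSL.ge_iff_eq) rfl rfl
  have hE : M.E ≠ ∅ := fun h ↦ by
    rw [rank, h, rk_eq_zero_of_subset_loops (Set.empty_subset _)] at hr
    exact zero_ne_one hr
  refine hPZ.P_eq_of_Z_eq_add hE hZ (fun i hi ↦ ?_) (fun j hj ↦ ?_)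
  · rw [hr] at hi ⊢
    split_ifs <;> interval_cases i <;> simp [coeff_one, coeff_X]
  · split_ifs <;> simp [coeff_one]
    omega

end KL

structure IsSteinerSystem (E : Set α) (Blocks : Set (Set α)) (d k n : ℕ) : Prop where
  ncard_eq : E.ncard = n
  subset_of_mem : ∀ Bl ∈ Blocks, Bl ⊆ E
  ncard_of_mem : ∀ Bl ∈ Blocks, Bl.ncard = k
  existsUnique : ∀ D ⊆ E, D.ncard = d → ∃! Bl, Bl ∈ Blocks ∧ D ⊆ Bl

def derivedBlocks (Blocks : Set (Set α)) (F : Set α) : Set (Set α) :=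
  (· \ F) '' {Bl | Bl ∈ Blocks ∧ F ⊆ Bl}

namespace IsSteinerSystem

variable [Finite α] {E F : Set α} {Blocks : Set (Set α)} {d k n : ℕ}

lemma derived (hS : IsSteinerSystem E Blocks d k n) (hFE : F ⊆ E) (hF : F.ncard ≤ d) :
    IsSteinerSystem (E \ F) (derivedBlocks Blocks F) (d - F.ncard) (k - F.ncard)
      (n - F.ncard) where
  ncard_eq := by rw [Set.ncard_sdiff hFE, hS.ncard_eq]
  subset_of_mem := by
    rintro _ ⟨Bl, ⟨hBl, -⟩, rfl⟩
    exact Set.sdiff_subset_sdiff_left (hS.subset_of_mem Bl hBl)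
  ncard_of_mem := by
    rintro _ ⟨Bl, ⟨hBl, hFBl⟩, rfl⟩
    rw [Set.ncard_sdiff hFBl, hS.ncard_of_mem Bl hBl]
  existsUnique := by
    intro D hDE hD
    have hDF : Disjoint D F := Set.subset_sdiff.mp hDE |>.2
    have hDFE : D ∪ F ⊆ E := Set.union_subset (hDE.trans Set.sdiff_subset) hFE
    obtain ⟨Bl, ⟨hBl, hDFBl⟩, huniq⟩ :=
      hS.existsUnique _ hDFE (by rw [Set.ncard_union_eq hDF, hD]; omega)
    refine ⟨Bl \ F, ⟨⟨Bl, ⟨hBl, Set.union_subset_iff.mp hDFBl |>.2⟩, rfl⟩,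
      Set.subset_sdiff.mpr ⟨Set.union_subset_iff.mp hDFBl |>.1, hDF⟩⟩, ?_⟩
    rintro _ ⟨⟨Bl', ⟨hBl', hFBl'⟩, rfl⟩, hDBl'⟩
    rw [huniq Bl' ⟨hBl', Set.union_subset (hDBl'.trans Set.sdiff_subset) hFBl'⟩]

open scoped Classical in
lemma ncard_eq_card_filter_powerset (hS : IsSteinerSystem E Blocks d k n) :
    Blocks.ncard =
      (E.toFinite.toFinset.powerset.filter fun S : Finset α ↦ (S : Set α) ∈ Blocks).card := by
  classical
  rw [← Set.ncard_coe_finset, ← Set.ncard_image_of_injective _ Finset.coe_injective]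
  congr 1
  ext Bl
  simp only [Finset.coe_filter, Finset.mem_powerset, Set.mem_image, Set.mem_ofPred_eq]
  refine ⟨fun hBl ↦ ⟨(Set.toFinite Bl).toFinset, ⟨?_, by simpa⟩, by simp⟩,
    fun ⟨S, ⟨_, hS⟩, hSBl⟩ ↦ hSBl ▸ hS⟩
  simpa [← Finset.coe_subset] using hS.subset_of_mem Bl hBl

/-- Double counting of the pairs (`d`-subset, block containing it). -/
lemma ncard_mul_choose (hS : IsSteinerSystem E Blocks d k n) :
    Blocks.ncard * k.choose d = n.choose d := by
  classical
  set E' := E.toFinite.toFinset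
  have hE' : (E' : Set α) = E := Set.Finite.coe_toFinset _
  have hcount := Finset.card_mul_eq_card_mul (fun (Bl D : Finset α) ↦ D ⊆ Bl)
    (s := E'.powerset.filter fun S : Finset α ↦ (S : Set α) ∈ Blocks) (t := E'.powersetCard d)
    (m := k.choose d) (n := 1) ?_ ?_
  · rwa [← hS.ncard_eq_card_filter_powerset, Finset.card_powersetCard, mul_one,
      ← Set.ncard_coe_finset, hE', hS.ncard_eq] at hcount
  · intro Bl hBl
    rw [Finset.mem_filter, Finset.mem_powerset] at hBl
    have : Finset.bipartiteAbove (fun Bl D ↦ D ⊆ Bl) (E'.powersetCard d) Bl =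
        Bl.powersetCard d := by
      ext D
      simp only [Finset.mem_bipartiteAbove, Finset.mem_powersetCard]
      exact ⟨fun ⟨⟨_, hD⟩, hDBl⟩ ↦ ⟨hDBl, hD⟩,
        fun ⟨hDBl, hD⟩ ↦ ⟨⟨hDBl.trans hBl.1, hD⟩, hDBl⟩⟩
    rw [this, Finset.card_powersetCard, ← Set.ncard_coe_finset, hS.ncard_of_mem _ hBl.2]
  · intro D hD
    rw [Finset.mem_powersetCard, ← Finset.coe_subset, hE'] at hD
    obtain ⟨Bl, ⟨hBl, hDBl⟩, huniq⟩ :=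
      hS.existsUnique D hD.1 (by rw [Set.ncard_coe_finset, hD.2])
    rw [Finset.card_eq_one]
    refine ⟨(Set.toFinite Bl).toFinset, ?_⟩
    ext Bl'
    simp only [Finset.mem_bipartiteBelow, Finset.mem_filter, Finset.mem_powerset,
      Finset.mem_singleton]
    constructor
    · rintro ⟨⟨-, hBl'⟩, hDBl'⟩
      rw [← Finset.coe_inj, huniq _ ⟨hBl', Finset.coe_subset.mpr hDBl'⟩,
        Set.Finite.coe_toFinset]
    · rintro rfl
      refine ⟨⟨?_, by simpa⟩, by simpa [← Finset.coe_subset]⟩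
      simpa [← Finset.coe_subset, hE'] using hS.subset_of_mem Bl hBl

end IsSteinerSystem

structure IsSteinerMatroid (M : Matroid α) (Blocks : Set (Set α)) (d k n : ℕ) : Prop
    extends IsSteinerSystem M.E Blocks d k n where
  isBase_iff : ∀ B, M.IsBase B ↔ B ⊆ M.E ∧ B.ncard = d + 1 ∧ ∀ Bl ∈ Blocks, ¬B ⊆ Bl

namespace IsSteinerMatroid

variable {Blocks : Set (Set α)} {d k n : ℕ} {D F Bl : Set α} {x : α}

lemma exists_mem_notMem (hM : IsSteinerMatroid M Blocks d k n) (hBl : Bl ∈ Blocks) :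
    ∃ x ∈ M.E, x ∉ Bl := by
  obtain ⟨B, hB⟩ := M.exists_isBase
  obtain ⟨x, hxB, hxBl⟩ := Set.not_subset.mp (((hM.isBase_iff B).mp hB).2.2 Bl hBl)
  exact ⟨x, hB.subset_ground hxB, hxBl⟩

variable [Finite α]

lemma d_lt_n (hM : IsSteinerMatroid M Blocks d k n) : d < n := by
  obtain ⟨B, hB⟩ := M.exists_isBase
  have := Set.ncard_le_ncard hB.subset_ground
  rw [((hM.isBase_iff B).mp hB).2.1, hM.ncard_eq] at this
  omega

lemma d_le_k (hM : IsSteinerMatroid M Blocks d k n) : d ≤ k := by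
  obtain ⟨D, hDE, hD⟩ := Set.exists_subset_card_eq (hM.ncard_eq ▸ hM.d_lt_n.le)
  obtain ⟨Bl, ⟨hBl, hDBl⟩, -⟩ := hM.existsUnique D hDE hD
  exact hD ▸ hM.ncard_of_mem Bl hBl ▸ Set.ncard_le_ncard hDBl

lemma isBase_insert (hM : IsSteinerMatroid M Blocks d k n) (hDE : D ⊆ M.E) (hD : D.ncard = d)
    (hBl : Bl ∈ Blocks) (hDBl : D ⊆ Bl) (hx : x ∈ M.E) (hxBl : x ∉ Bl) :
    M.IsBase (insert x D) := by
  refine (hM.isBase_iff _).mpr ⟨Set.insert_subset hx hDE, ?_, fun Bl' hBl' hxDBl' ↦ ?_⟩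
  · rw [Set.ncard_insert_of_notMem (fun hxD ↦ hxBl (hDBl hxD)), hD]
  · obtain ⟨_, -, huniq⟩ := hM.existsUnique D hDE hD
    rw [huniq Bl' ⟨hBl', (Set.subset_insert x D).trans hxDBl'⟩,
      ← huniq Bl ⟨hBl, hDBl⟩] at hxDBl'
    exact hxBl (hxDBl' (Set.mem_insert x D))

lemma indep_of_ncard_le (hM : IsSteinerMatroid M Blocks d k n) (hIE : I ⊆ M.E)
    (hI : I.ncard ≤ d) : M.Indep I := by
  obtain ⟨D, hID, hDE, hD⟩ :=
    Set.exists_subsuperset_card_eq hIE hI (hM.ncard_eq ▸ hM.d_lt_n.le)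
  obtain ⟨Bl, ⟨hBl, hDBl⟩, -⟩ := hM.existsUnique D hDE hD
  obtain ⟨x, hx, hxBl⟩ := hM.exists_mem_notMem hBl
  exact (hM.isBase_insert hDE hD hBl hDBl hx hxBl).indep.subset
    (hID.trans (Set.subset_insert x D))

lemma rank_eq (hM : IsSteinerMatroid M Blocks d k n) : rank M = d + 1 := by
  obtain ⟨B, hB⟩ := M.exists_isBase
  rw [rank_eq_ncard hB, ((hM.isBase_iff B).mp hB).2.1]

lemma ncard_le_of_indep_of_subset (hM : IsSteinerMatroid M Blocks d k n) (hBl : Bl ∈ Blocks)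
    (hI : M.Indep I) (hIBl : I ⊆ Bl) : I.ncard ≤ d := by
  by_contra! h
  have hB := isBase_of_indep_of_rank_le hI (hM.rank_eq ▸ h)
  exact ((hM.isBase_iff I).mp hB).2.2 Bl hBl hIBl

lemma rk_eq_of_subset (hM : IsSteinerMatroid M Blocks d k n) (hBl : Bl ∈ Blocks)
    (hSBl : S ⊆ Bl) (hS : d ≤ S.ncard) : rk M S = d := by
  refine le_antisymm (rk_le fun I hIS hI ↦ hM.ncard_le_of_indep_of_subset hBl hI (hIS.trans hSBl))
    ?_
  obtain ⟨D, hDS, hD⟩ := Set.exists_subset_card_eq hS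
  have hDE := (hDS.trans hSBl).trans (hM.subset_of_mem Bl hBl)
  exact hD ▸ le_rk hDS (hM.indep_of_ncard_le hDE hD.le)

lemma exists_isBase_subset (hM : IsSteinerMatroid M Blocks d k n) (hSE : S ⊆ M.E)
    (hS : d ≤ S.ncard) (hSBl : ∀ Bl ∈ Blocks, ¬S ⊆ Bl) :
    ∃ B, M.IsBase B ∧ B ⊆ S := by
  obtain ⟨D, hDS, hD⟩ := Set.exists_subset_card_eq hS
  obtain ⟨Bl, ⟨hBl, hDBl⟩, -⟩ := hM.existsUnique D (hDS.trans hSE) hD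
  obtain ⟨x, hxS, hxBl⟩ := Set.not_subset.mp (hSBl Bl hBl)
  exact ⟨_, hM.isBase_insert (hDS.trans hSE) hD hBl hDBl (hSE hxS) hxBl,
    Set.insert_subset hxS hDS⟩

lemma contract (hM : IsSteinerMatroid M Blocks d k n) (hFE : F ⊆ M.E) (hF : F.ncard ≤ d) :
    IsSteinerMatroid (M ⧸ F) (derivedBlocks Blocks F) (d - F.ncard) (k - F.ncard)
      (n - F.ncard) where
  toIsSteinerSystem := hM.derived hFE hF
  isBase_iff B := by
    rw [contract_eq, (hM.indep_of_ncard_le hFE hF).contract_isBase_iff, hM.isBase_iff,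
      Matroid.contract_ground, derivedBlocks, Set.forall_mem_image]
    constructor
    · rintro ⟨⟨hBFE, hBF, hBl⟩, hdisj⟩
      refine ⟨Set.subset_sdiff.mpr ⟨(Set.union_subset_iff.mp hBFE).1, hdisj⟩, ?_, ?_⟩
      · rw [Set.ncard_union_eq hdisj] at hBF
        omega
      · rintro Bl ⟨hBl', hFBl⟩ hBBl
        exact hBl Bl hBl' (Set.union_subset (hBBl.trans Set.sdiff_subset) hFBl)
    · rintro ⟨hBE, hB, hBl⟩
      have hdisj := (Set.subset_sdiff.mp hBE).2
      refine ⟨⟨Set.union_subset (hBE.trans Set.sdiff_subset) hFE, ?_, ?_⟩, hdisj⟩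
      · rw [Set.ncard_union_eq hdisj]
        omega
      · intro Bl hBl' hBFBl
        exact hBl ⟨hBl', (Set.union_subset_iff.mp hBFBl).2⟩
          (Set.subset_sdiff.mpr ⟨(Set.union_subset_iff.mp hBFBl).1, hdisj⟩)

lemma loops_eq (hM : IsSteinerMatroid M Blocks 0 k n) (hBl : Bl ∈ Blocks) : M.loops = Bl := by
  have hBlocks : ∀ Bl' ∈ Blocks, Bl' = Bl := by
    obtain ⟨_, -, huniq⟩ := hM.existsUnique ∅ (Set.empty_subset _) (Set.ncard_empty α)
    exact fun Bl' hBl' ↦ (huniq Bl' ⟨hBl', Set.empty_subset _⟩).trans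
      (huniq Bl ⟨hBl, Set.empty_subset _⟩).symm
  have hnonloop : ∀ e ∈ M.E, M.IsNonloop e ↔ e ∉ Bl := by
    intro e he
    rw [← indep_singleton]
    refine ⟨fun h ↦ ?_, fun h ↦ ?_⟩
    · have hB := isBase_of_indep_of_rank_le h (by simp [hM.rank_eq])
      exact fun heBl ↦ ((hM.isBase_iff _).mp hB).2.2 Bl hBl (Set.singleton_subset_iff.mpr heBl)
    · refine ((hM.isBase_iff {e}).mpr ⟨Set.singleton_subset_iff.mpr he, by simp, ?_⟩).indep
      exact fun Bl' hBl' ↦ hBlocks Bl' hBl' ▸ fun h' ↦ h (Set.singleton_subset_iff.mp h')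
  ext e
  by_cases he : e ∈ M.E
  · rw [← not_iff_not, ← hnonloop e he, isNonloop_iff_mem_compl_loops]
    exact ⟨fun h ↦ ⟨he, h⟩, fun h ↦ h.2⟩
  · exact iff_of_false (fun h ↦ he (M.loops_subset_ground h))
      (fun h ↦ he (hM.subset_of_mem Bl hBl h))

end IsSteinerMatroid

namespace IsSteinerMatroid

variable [Fintype α] {P Z : Matroid α → ℤ[X]} {Blocks : Set (Set α)} {d k n : ℕ}
  {Bl : Set α}

/-- Contracting a `d`-subset `J` of `S` leaves a rank-one matroid whose loops form the derived
block `Bl \ J`; the rest of `S` consists of loops of it. -/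
lemma P_contract_of_subset (hM : IsSteinerMatroid M Blocks d k n) (hPZ : PZaxioms P Z)
    (hBl : Bl ∈ Blocks) (hSBl : S ⊆ Bl) (hS : d ≤ S.ncard) :
    P (M ⧸ S) = if S = Bl then 1 else 0 := by
  obtain ⟨J, hJS, hJ⟩ := Set.exists_subset_card_eq hS
  have hN := hM.contract ((hJS.trans hSBl).trans (hM.subset_of_mem Bl hBl)) hJ.le
  rw [hJ, Nat.sub_self] at hN
  have hloops := hN.loops_eq (Bl := Bl \ J) ⟨Bl, ⟨hBl, hJS.trans hSBl⟩, rfl⟩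
  have hSJ : S \ J ⊆ (M ⧸ J).loops := hloops ▸ Set.sdiff_subset_sdiff_left hSBl
  have hMS : (M ⧸ S) = (M ⧸ J) ⧸ (S \ J) := by
    rw [contract_eq, contract_eq, contract_eq, contract_contract, Set.union_sdiff_cancel hJS]
  rw [hMS, hPZ.P_eq_of_rank_eq_one (by rw [rank_contract_of_subset_loops hSJ, hN.rank_eq]),
    loops_contract_of_subset_loops hSJ, hloops, Set.sdiff_sdiff, Set.union_sdiff_cancel hJS]
  exact if_congr (Set.sdiff_eq_empty.trans hSBl.ge_iff_eq) rfl rfl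

open scoped Classical in
lemma X_pow_rk_mul_P_contract (hM : IsSteinerMatroid M Blocks d k n) (hPZ : PZaxioms P Z)
    (hSE : S ⊆ M.E) :
    X ^ rk M S * P (M ⧸ S) = (if S.ncard < d then X ^ S.ncard * P (M ⧸ S) else 0) +
      (if S ∈ Blocks then X ^ d else 0) + (if S = M.E then X ^ (d + 1) else 0) := by
  by_cases hSd : S.ncard < d
  · have hSBlocks : S ∉ Blocks := fun h ↦ by
      have := hM.ncard_of_mem S h
      have := hM.d_le_k
      omega
    have hSE' : S ≠ M.E := fun h ↦ by
      have := hM.ncard_eq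
      have := hM.d_lt_n
      rw [← h] at *
      omega
    rw [rk_eq_ncard_of_indep (hM.indep_of_ncard_le hSE hSd.le), if_pos hSd, if_neg hSBlocks,
      if_neg hSE', add_zero, add_zero]
  rw [if_neg hSd, zero_add]
  replace hSd := not_lt.mp hSd
  by_cases hSBl : ∃ Bl ∈ Blocks, S ⊆ Bl
  · obtain ⟨Bl, hBl, hSBl⟩ := hSBl
    obtain ⟨x, hx, hxBl⟩ := hM.exists_mem_notMem hBl
    have hSBlocks : S ∈ Blocks ↔ S = Bl := ⟨fun h ↦ Set.eq_of_subset_of_ncard_le hSBl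
      (by rw [hM.ncard_of_mem S h, hM.ncard_of_mem Bl hBl]), by rintro rfl; exact hBl⟩
    rw [hM.rk_eq_of_subset hBl hSBl hSd, hM.P_contract_of_subset hPZ hBl hSBl hSd,
      if_neg (fun h : S = M.E ↦ hxBl (hSBl (by rw [h]; exact hx))), add_zero,
      if_congr hSBlocks rfl rfl, mul_ite, mul_one, mul_zero]
  · push Not at hSBl
    obtain ⟨B, hB, hBS⟩ := hM.exists_isBase_subset hSE hSd hSBl
    have hSsp := hB.spanning.superset hBS hSE
    rw [rk_eq_rank_of_spanning hSsp, hM.rank_eq, hPZ.P_contract_of_spanning hSsp,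
      if_neg (fun h ↦ hSBl S h subset_rfl), zero_add, mul_ite, mul_one, mul_zero]

open scoped Classical in
theorem Z_eq (hM : IsSteinerMatroid M Blocks d k n) (hPZ : PZaxioms P Z) (q : ℕ → ℤ[X])
    (hq : ∀ F ⊆ M.E, F.ncard < d → P (M ⧸ F) = q F.ncard) :
    Z M = ∑ i ∈ Finset.range d, (n.choose i : ℤ[X]) * X ^ i * q i
      + (Blocks.ncard : ℤ[X]) * X ^ d + X ^ (d + 1) := by
  set E' := M.E.toFinite.toFinset
  have hE' : (E' : Set α) = M.E := Set.Finite.coe_toFinset _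
  have hE'card : E'.card = n := by rw [← Set.ncard_coe_finset, hE', hM.ncard_eq]
  have hterm : ∀ S ∈ E'.powerset, X ^ rk M (S : Set α) * P (M ⧸ (S : Set α)) =
      (if S.card < d then X ^ S.card * q S.card else 0) +
      (if (S : Set α) ∈ Blocks then X ^ d else 0) + (if S = E' then X ^ (d + 1) else 0) := by
    intro S hS
    rw [Finset.mem_powerset, ← Finset.coe_subset, hE'] at hS
    rw [hM.X_pow_rk_mul_P_contract hPZ hS, Set.ncard_coe_finset]
    simp only [← hE', Finset.coe_inj]
    congr 2
    split_ifs with hSd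
    · rw [hq _ hS (by rwa [Set.ncard_coe_finset]), Set.ncard_coe_finset]
    · rfl
  rw [hPZ.2.2.2 M, Finset.sum_congr rfl hterm, Finset.sum_add_distrib,
    Finset.sum_add_distrib, Finset.sum_ite_eq', if_pos (Finset.mem_powerset_self _),
    Finset.sum_powerset_apply_card (fun m ↦ if m < d then X ^ m * q m else 0),
    Finset.sum_ite, Finset.sum_const, Finset.sum_const_zero, add_zero,
    ← hM.ncard_eq_card_filter_powerset, hE'card, nsmul_eq_mul]
  simp_rw [smul_ite, smul_zero]
  have hrange : (Finset.range (n + 1)).filter (· < d) = Finset.range d := by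
    ext i
    simp only [Finset.mem_filter, Finset.mem_range]
    have := hM.d_lt_n
    omega
  rw [← Finset.sum_filter, hrange]
  simp only [nsmul_eq_mul, mul_assoc]

end IsSteinerMatroid

/-- The Kazhdan–Lusztig polynomial of the matroid of a Steiner system of type
`(d, d + 3, d + 19)`, `1 ≤ d ≤ 5`: the Witt design and its iterated derived designs. -/
noncomputable def wittKL : ℕ → ℤ[X]
  | 1 => 1
  | 2 => 1
  | 3 => 1 + C 55 * X
  | 4 => 1 + C 230 * X + C 253 * X ^ 2
  | 5 => 1 + C 735 * X + C 4830 * X ^ 2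
  | _ => 0

noncomputable def wittTail (d : ℕ) : ℤ[X] :=
  ∑ i ∈ Finset.Ico 1 d, ((d + 19).choose i : ℤ[X]) * X ^ i * wittKL (d - i)
    + (((d + 19).choose d / (d + 3).choose d : ℕ) : ℤ[X]) * X ^ d + X ^ (d + 1)

lemma coeff_wittKL_add_wittTail {d : ℕ} (hd₁ : 1 ≤ d) (hd₅ : d ≤ 5) :
    ∀ i ≤ d + 1,
      (wittKL d + wittTail d).coeff i = (wittKL d + wittTail d).coeff (d + 1 - i) := by
  intro i hi
  interval_cases d <;> interval_cases i <;>
    simp [wittKL, wittTail, Finset.sum_Ico_succ_top, coeff_X_pow, coeff_X, coeff_one, mul_assoc,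
      coeff_X_pow_mul', Nat.choose_eq_factorial_div_factorial, Nat.factorial]

lemma coeff_wittKL {d j : ℕ} (hj : d + 1 ≤ 2 * j) : (wittKL d).coeff j = 0 := by
  unfold wittKL
  split <;> simp [coeff_X_pow, coeff_X, coeff_one] <;> omega

theorem PZaxioms.P_eq_wittKL [Fintype α] {P Z : Matroid α → ℤ[X]} (hPZ : PZaxioms P Z)
    {d : ℕ} (hd₁ : 1 ≤ d) (hd₅ : d ≤ 5) {Blocks : Set (Set α)}
    (hM : IsSteinerMatroid M Blocks d (d + 3) (d + 19)) : P M = wittKL d := by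
  induction d using Nat.strong_induction_on generalizing M Blocks with
  | _ d IH =>
  have hq : ∀ F ⊆ M.E, F.ncard < d →
      P (M ⧸ F) = if F.ncard = 0 then P M else wittKL (d - F.ncard) := by
    intro F hFE hFd
    split_ifs with hF
    · rw [(Set.ncard_eq_zero (s := F)).mp hF, contract_eq, contract_empty]
    have hN := hM.contract hFE hFd.le
    rw [show d + 3 - F.ncard = d - F.ncard + 3 by omega,
      show d + 19 - F.ncard = d - F.ncard + 19 by omega] at hN
    exact IH _ (by omega) (by omega) (by omega) hN
  have hZ : Z M = P M + wittTail d := by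
    rw [hM.Z_eq hPZ (fun i ↦ if i = 0 then P M else wittKL (d - i)) hq,
      Finset.sum_range_eq_add_Ico _ hd₁, wittTail,
      Nat.eq_div_of_mul_eq_left (Nat.choose_pos (by omega)).ne' hM.ncard_mul_choose,
      Finset.sum_congr rfl fun i hi ↦ by
        rw [if_neg (Nat.one_le_iff_ne_zero.mp (Finset.mem_Ico.mp hi).1)]]
    simp only [↓reduceIte, Nat.choose_zero_right, Nat.cast_one, pow_zero, one_mul]
    ring
  have hE : M.E ≠ ∅ := fun h ↦ by simpa [h] using hM.ncard_eq
  refine hPZ.P_eq_of_Z_eq_add hE hZ ?_ ?_ <;> rw [hM.rank_eq]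
  · exact coeff_wittKL_add_wittTail hd₁ hd₅
  · exact fun j ↦ coeff_wittKL

/-- Let `(E, ℋ)` be a Steiner system of type `(5,8,24)`: `|E| = 24`,
every block `Bl ∈ ℋ` is a `8`-element subset of `E`, and every `5`-element subset of
`E` is contained in exactly one block.  Let `M` be its associated matroid of rank `6`,
whose bases are the `6`-element subsets of `E` contained in no block.  Then
`P_M(t) = 1 + 735t + 4830t²`. -/
theorem steiner_5_8_24_KL_polynomial {β : Type} [Fintype β]
    (P Z : Matroid β → Polynomial ℤ) (hPZ : PZaxioms P Z)
    (E : Set β) (Blocks : Set (Set β))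
    (hEcard : E.ncard = 24)
    (hBlocks : ∀ Bl ∈ Blocks, Bl ⊆ E ∧ Bl.ncard = 8)
    (hSteiner : ∀ D ⊆ E, D.ncard = 5 → ∃! Bl, Bl ∈ Blocks ∧ D ⊆ Bl)
    (M : Matroid β) (hME : M.E = E)
    (hMB : ∀ B : Set β, M.IsBase B ↔ B ⊆ E ∧ B.ncard = 6 ∧ ∀ Bl ∈ Blocks, ¬B ⊆ Bl) :
    P M = 1 + C 735 * X + C 4830 * X ^ 2 := by
  subst hME
  have hM : IsSteinerMatroid M Blocks 5 8 24 :=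
    { ncard_eq := hEcard
      subset_of_mem := fun Bl hBl ↦ (hBlocks Bl hBl).1
      ncard_of_mem := fun Bl hBl ↦ (hBlocks Bl hBl).2
      existsUnique := hSteiner
      isBase_iff := hMB }
  exact hPZ.P_eq_wittKL (d := 5) (by norm_num) le_rfl hM

end KLPaper
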